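/- Let G = (V,E) be a finite simple graph on V = {1,…,n} with n ≥ 1, and for 0 ≤ k ≤ n let z^C_k(G) = z^C_{J_k}(G) where J_k = { I ⊆ V : |I| = k }. Then ϑ(G) = z^C_0(G) = z^C_1(G), z^C_{k-1}(G) ≥ z^C_k(G) for all 1 ≤ k ≤ n, and z^C_n(G) = α(G), where ϑ(G) denotes the optimal value of the semidefinite program sup{ ⟨J_{n×n}, X⟩ : X ∈ CTH²(G) }. -/

import Mathlib

open Matrix

noncomputable section

/-- A stable set vector of a graph `G`: a 0/1 vector with `s i * s j = 0` on edges. -/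
def IsStableVec {V : Type*} (G : SimpleGraph V) (s : V → ℝ) : Prop :=
  (∀ i, s i = 0 ∨ s i = 1) ∧ ∀ i j, G.Adj i j → s i * s j = 0

/-- The squared stable set polytope `STAB²(G) = conv{ s sᵀ : s ∈ S(G) }`. -/
def stab2 {V : Type*} (G : SimpleGraph V) : Set (Matrix V V ℝ) :=
  convexHull ℝ { M | ∃ s, IsStableVec G s ∧ M = Matrix.vecMulVec s s }

/-- The scaled squared stable set polytope
`SSTAB²(G) = conv({ (1/(sᵀs)) s sᵀ : s ∈ S(G), s ≠ 0 } ∪ {0})`. -/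
def sstab2 {V : Type*} [Fintype V] (G : SimpleGraph V) : Set (Matrix V V ℝ) :=
  convexHull ℝ
    ({ M | ∃ s, IsStableVec G s ∧ s ≠ 0 ∧
        M = (∑ k, s k * s k)⁻¹ • Matrix.vecMulVec s s } ∪ {(0 : Matrix V V ℝ)})

/-- The feasible region `TH²(G)` of the SDP (Tn+1): pairs `(x, X)` with `X` symmetric,
`diag X = x`, `X i j = 0` on edges and `X - x xᵀ` positive semidefinite. -/
def th2 {n : ℕ} (G : SimpleGraph (Fin n)) :
    Set ((Fin n → ℝ) × Matrix (Fin n) (Fin n) ℝ) :=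
  { p | p.2.IsSymm ∧ (∀ i, p.2 i i = p.1 i) ∧
      (∀ i j, G.Adj i j → p.2 i j = 0) ∧ (p.2 - Matrix.vecMulVec p.1 p.1).PosSemidef }

/-- The feasible region `CTH²(G)` of the SDP (Tn): symmetric PSD matrices with trace 1
vanishing on edges. -/
def cth2 {n : ℕ} (G : SimpleGraph (Fin n)) : Set (Matrix (Fin n) (Fin n) ℝ) :=
  { X | X.IsSymm ∧ X.trace = 1 ∧ (∀ i j, G.Adj i j → X i j = 0) ∧ X.PosSemidef }

/-- The principal submatrix `X_I` of `X` indexed by `I`. -/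
def subMat {n : ℕ} (X : Matrix (Fin n) (Fin n) ℝ) (I : Finset (Fin n)) :
    Matrix (I : Set (Fin n)) (I : Set (Fin n)) ℝ :=
  X.submatrix Subtype.val Subtype.val

/-- The exact subgraph constraint (ESC) for the subgraph of `G` induced by `I`. -/
def escFeas {n : ℕ} (G : SimpleGraph (Fin n)) (X : Matrix (Fin n) (Fin n) ℝ)
    (I : Finset (Fin n)) : Prop :=
  subMat X I ∈ stab2 (G.induce (I : Set (Fin n)))

/-- The scaled exact subgraph constraint (SESC) for the subgraph of `G` induced by `I`. -/
def sescFeas {n : ℕ} (G : SimpleGraph (Fin n)) (X : Matrix (Fin n) (Fin n) ℝ)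
    (I : Finset (Fin n)) : Prop :=
  subMat X I ∈ sstab2 (G.induce (I : Set (Fin n)))

/-- `z^E_J(G)`: optimal value of (Tn+1) with the ESCs for all `I ∈ J`. -/
def zE {n : ℕ} (G : SimpleGraph (Fin n)) (J : Set (Finset (Fin n))) : ℝ :=
  sSup { r | ∃ x X, (x, X) ∈ th2 G ∧ (∀ I ∈ J, escFeas G X I) ∧ r = ∑ i, x i }

/-- `z^C_J(G)`: optimal value of (Tn) with the ESCs for all `I ∈ J`. -/
def zC {n : ℕ} (G : SimpleGraph (Fin n)) (J : Set (Finset (Fin n))) : ℝ :=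
  sSup { r | ∃ X, X ∈ cth2 G ∧ (∀ I ∈ J, escFeas G X I) ∧ r = ∑ i, ∑ j, X i j }

/-- `z^S_J(G)`: optimal value of (Tn) with the SESCs for all `I ∈ J`. -/
def zS {n : ℕ} (G : SimpleGraph (Fin n)) (J : Set (Finset (Fin n))) : ℝ :=
  sSup { r | ∃ X, X ∈ cth2 G ∧ (∀ I ∈ J, sescFeas G X I) ∧ r = ∑ i, ∑ j, X i j }

/-- The collection `J_k` of all vertex subsets of cardinality `k`. -/
def Jk (n k : ℕ) : Set (Finset (Fin n)) := { I | I.card = k }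

/-!
Every `X ∈ CTH²(G)` satisfies the exact subgraph constraints for `|I| ≤ 1` automatically:
`X_∅` is the empty matrix, and `X_{{i}} = X_ii · [1]` with `X_ii ∈ [0, 1]`. Restricting to a
principal submatrix maps `STAB²(G_I)` into `STAB²(G_{I'})` for `I' ⊆ I`, so the constraints
of level `k` imply those of level `k - 1`. At level `n` the constraint says `X ∈ STAB²(G)`;
the linear inequality `⟨J, M⟩ ≤ α · tr M` holds on every generator `s sᵀ` because
`(1ᵀs)² ≤ α · 1ᵀs`, hence `⟨J, X⟩ ≤ α`, and `s sᵀ / α` for a maximum stable set `s` attains it.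
-/

open Finset

section StableVec

variable {V W : Type*} {G : SimpleGraph V} {H : SimpleGraph W} {s : V → ℝ}

lemma IsStableVec.comp (hs : IsStableVec G s) (f : H →g G) : IsStableVec H (s ∘ f) :=
  ⟨fun i => hs.1 (f i), fun _ _ h => hs.2 _ _ (f.map_rel h)⟩

lemma isStableVec_zero (G : SimpleGraph V) : IsStableVec G 0 :=
  ⟨fun _ => Or.inl rfl, fun _ _ _ => mul_zero _⟩

lemma isStableVec_one [Subsingleton V] (G : SimpleGraph V) : IsStableVec G 1 :=
  ⟨fun _ => Or.inr rfl, fun i j h => (G.ne_of_adj h (Subsingleton.elim i j)).elim⟩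

lemma isStableVec_single [DecidableEq V] (G : SimpleGraph V) (v : V) :
    IsStableVec G (Pi.single v 1) := by
  refine ⟨fun i => ?_, fun i j h => ?_⟩
  · by_cases hi : i = v <;> simp [hi]
  · by_cases hi : i = v
    · simp [Pi.single_apply, hi ▸ (G.ne_of_adj h).symm]
    · simp [hi]

lemma IsStableVec.nonneg (hs : IsStableVec G s) (i : V) : 0 ≤ s i := by
  rcases hs.1 i with h | h <;> simp [h]

lemma IsStableVec.mul_self (hs : IsStableVec G s) (i : V) : s i * s i = s i := by
  rcases hs.1 i with h | h <;> simp [h]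

lemma IsStableVec.trace_vecMulVec [Fintype V] (hs : IsStableVec G s) :
    (vecMulVec s s).trace = ∑ i, s i :=
  sum_congr rfl fun i _ => hs.mul_self i

end StableVec

lemma sum_sum_vecMulVec {V : Type*} [Fintype V] (s t : V → ℝ) :
    ∑ i, ∑ j, vecMulVec s t i j = (∑ i, s i) * ∑ j, t j :=
  (Fintype.sum_mul_sum s t).symm

lemma Matrix.PosSemidef.sum_sum_le_card_mul_trace {m : Type*} [Fintype m] {X : Matrix m m ℝ}
    (hX : X.PosSemidef) : ∑ i, ∑ j, X i j ≤ Fintype.card m * X.trace := by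
  classical
  -- `(eᵢ - eⱼ)ᵀ X (eᵢ - eⱼ) ≥ 0` gives `2 Xᵢⱼ ≤ Xᵢᵢ + Xⱼⱼ`.
  have hentry : ∀ i j, X i j ≤ (X i i + X j j) / 2 := by
    intro i j
    have h := hX.dotProduct_mulVec_nonneg (Pi.single i 1 - Pi.single j 1)
    have hsym : X j i = X i j := by simpa using hX.isHermitian.apply i j
    simp only [star_trivial, mulVec_sub, sub_dotProduct, dotProduct_sub, mulVec_single,
      single_dotProduct, one_mul, MulOpposite.op_one, one_smul, col_apply] at h
    linarith
  calc ∑ i, ∑ j, X i j ≤ ∑ i, ∑ j, (X i i + X j j) / 2 :=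
        sum_le_sum fun i _ => sum_le_sum fun j _ => hentry i j
    _ = Fintype.card m * X.trace := by
        simp only [← sum_div, sum_add_distrib, sum_const, card_univ, nsmul_eq_mul, ← mul_sum,
          trace, diag_apply]
        ring

section Stab2

variable {V W : Type*} {G : SimpleGraph V} {H : SimpleGraph W} {M : Matrix V V ℝ}

lemma zero_mem_stab2 (G : SimpleGraph V) : (0 : Matrix V V ℝ) ∈ stab2 G :=
  subset_convexHull ℝ _ ⟨0, isStableVec_zero G, (zero_vecMulVec 0).symm⟩

lemma IsStableVec.vecMulVec_mem_stab2 {s : V → ℝ} (hs : IsStableVec G s) :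
    vecMulVec s s ∈ stab2 G :=
  subset_convexHull ℝ _ ⟨s, hs, rfl⟩

lemma smul_mem_stab2 (hM : M ∈ stab2 G) {c : ℝ} (hc : c ∈ Set.Icc 0 1) : c • M ∈ stab2 G :=
  (convex_convexHull ℝ _).smul_mem_of_zero_mem (zero_mem_stab2 G) hM hc

lemma submatrix_mem_stab2 (hM : M ∈ stab2 G) (f : H →g G) : M.submatrix f f ∈ stab2 H := by
  let restrict : Matrix V V ℝ →ₗ[ℝ] Matrix W W ℝ :=
    { toFun := fun M => M.submatrix f f
      map_add' := fun _ _ => rfl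
      map_smul' := fun _ _ => rfl }
  have h : restrict M ∈ convexHull ℝ (restrict '' _) :=
    restrict.image_convexHull _ ▸ Set.mem_image_of_mem restrict hM
  refine convexHull_mono ?_ h
  rintro _ ⟨_, ⟨t, ht, rfl⟩, rfl⟩
  exact ⟨t ∘ f, ht.comp f, rfl⟩

lemma sum_sum_le_mul_trace_of_mem_stab2 [Fintype V] {a : ℝ}
    (ha : ∀ s, IsStableVec G s → ∑ i, s i ≤ a) (hM : M ∈ stab2 G) :
    ∑ i, ∑ j, M i j ≤ a * M.trace := by
  have hconv : Convex ℝ {M : Matrix V V ℝ | ∑ i, ∑ j, M i j ≤ a * M.trace} := by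
    intro x hx y hy c d hc hd _
    simp only [Set.mem_ofPred_eq, Matrix.add_apply, Matrix.smul_apply, smul_eq_mul,
      sum_add_distrib, ← mul_sum, trace_add, trace_smul] at hx hy ⊢
    nlinarith [mul_le_mul_of_nonneg_left hx hc, mul_le_mul_of_nonneg_left hy hd]
  refine convexHull_min ?_ hconv hM
  rintro _ ⟨s, hs, rfl⟩
  have hsum : 0 ≤ ∑ i, s i := sum_nonneg fun i _ => hs.nonneg i
  simp only [Set.mem_ofPred_eq, sum_sum_vecMulVec, hs.trace_vecMulVec]
  exact mul_le_mul_of_nonneg_right (ha s hs) hsum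

end Stab2

section Hierarchy

variable {n : ℕ} {G : SimpleGraph (Fin n)} {X : Matrix (Fin n) (Fin n) ℝ}

lemma diag_mem_Icc_of_mem_cth2 (hX : X ∈ cth2 G) (i : Fin n) : X i i ∈ Set.Icc 0 1 := by
  have hdiag : ∀ j, 0 ≤ X j j := fun j => hX.2.2.2.diag_nonneg
  refine ⟨hdiag i, ?_⟩
  calc X i i ≤ ∑ j, X j j := single_le_sum (fun j _ => hdiag j) (mem_univ i)
    _ = 1 := hX.2.1

lemma sum_sum_le_of_mem_cth2 (hX : X ∈ cth2 G) : ∑ i, ∑ j, X i j ≤ n := by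
  simpa [hX.2.1] using hX.2.2.2.sum_sum_le_card_mul_trace

lemma IsStableVec.inv_smul_vecMulVec_mem_cth2 {s : Fin n → ℝ} (hs : IsStableVec G s)
    (h : ∑ i, s i ≠ 0) : (∑ i, s i)⁻¹ • vecMulVec s s ∈ cth2 G := by
  refine ⟨IsSymm.smul (transpose_vecMulVec s s) _, ?_, fun i j hij => ?_, ?_⟩
  · rw [trace_smul, hs.trace_vecMulVec, smul_eq_mul, inv_mul_cancel₀ h]
  · simp [vecMulVec_apply, hs.2 i j hij]
  · simpa using (posSemidef_vecMulVec_self_star s).smul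
      (inv_nonneg.2 (sum_nonneg fun i _ => hs.nonneg i))

lemma escFeas_of_subset {I J : Finset (Fin n)} (hIJ : I ⊆ J) (hX : escFeas G X J) :
    escFeas G X I :=
  submatrix_mem_stab2 hX (SimpleGraph.induceHomOfLE G (coe_subset.2 hIJ)).toHom

lemma escFeas_of_mem_stab2 (hX : X ∈ stab2 G) (I : Finset (Fin n)) : escFeas G X I :=
  submatrix_mem_stab2 hX (SimpleGraph.Embedding.induce (G := G) I).toHom

lemma mem_stab2_of_escFeas_univ (hX : escFeas G X univ) : X ∈ stab2 G :=
  submatrix_mem_stab2 hX ⟨fun i => ⟨i, mem_coe.2 (mem_univ i)⟩, id⟩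

lemma escFeas_empty (G : SimpleGraph (Fin n)) (X : Matrix (Fin n) (Fin n) ℝ) :
    escFeas G X ∅ := by
  have h : subMat X ∅ = 0 := by
    ext ⟨i, hi⟩
    simp at hi
  rw [escFeas, h]
  exact zero_mem_stab2 _

lemma escFeas_singleton (hX : X ∈ cth2 G) (i : Fin n) : escFeas G X {i} := by
  have : Subsingleton ((({i} : Finset (Fin n)) : Set (Fin n))) := by simp
  have hsub : subMat X {i} = X i i • vecMulVec 1 1 := by
    ext ⟨p, hp⟩ ⟨q, hq⟩
    simp only [mem_coe, mem_singleton] at hp hq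
    simp [subMat, hp, hq]
  rw [escFeas, hsub]
  exact smul_mem_stab2 (isStableVec_one _).vecMulVec_mem_stab2 (diag_mem_Icc_of_mem_cth2 hX i)

lemma exists_isStableVec_sum_eq_one (hn : 1 ≤ n) (G : SimpleGraph (Fin n)) :
    ∃ s, IsStableVec G s ∧ ∑ i, s i = 1 :=
  ⟨Pi.single ⟨0, hn⟩ 1, isStableVec_single G _, by simp⟩

-- The witness is `s sᵀ / 1ᵀs`.
lemma exists_feasible_of_isStableVec {s : Fin n → ℝ} (hs : IsStableVec G s)
    (h : 1 ≤ ∑ i, s i) :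
    ∃ X ∈ cth2 G, (∀ I, escFeas G X I) ∧ ∑ i, ∑ j, X i j = ∑ i, s i := by
  have hpos : 0 < ∑ i, s i := by linarith
  refine ⟨_, hs.inv_smul_vecMulVec_mem_cth2 hpos.ne', escFeas_of_mem_stab2
    (smul_mem_stab2 hs.vecMulVec_mem_stab2 ⟨inv_nonneg.2 hpos.le, inv_le_one_of_one_le₀ h⟩), ?_⟩
  simp only [Matrix.smul_apply, smul_eq_mul, ← mul_sum, sum_sum_vecMulVec]
  field_simp

lemma zC_eq_sSup_cth2 {J : Set (Finset (Fin n))} (h : ∀ X ∈ cth2 G, ∀ I ∈ J, escFeas G X I) :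
    zC G J = sSup {r | ∃ X, X ∈ cth2 G ∧ r = ∑ i, ∑ j, X i j} := by
  unfold zC
  congr 1
  ext r
  exact ⟨fun ⟨X, hX, _, hr⟩ => ⟨X, hX, hr⟩, fun ⟨X, hX, hr⟩ => ⟨X, hX, h X hX, hr⟩⟩

lemma zC_le_of_forall_subset (hn : 1 ≤ n) {J J' : Set (Finset (Fin n))}
    (hJ : ∀ I ∈ J, ∃ I' ∈ J', I ⊆ I') : zC G J' ≤ zC G J := by
  obtain ⟨s, hs, hsum⟩ := exists_isStableVec_sum_eq_one hn G
  obtain ⟨X, hX, hesc, -⟩ := exists_feasible_of_isStableVec hs hsum.ge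
  refine csSup_le_csSup ⟨n, ?_⟩ ⟨_, X, hX, fun I _ => hesc I, rfl⟩ ?_
  · rintro _ ⟨X, hX, -, rfl⟩
    exact sum_sum_le_of_mem_cth2 hX
  · rintro _ ⟨X, hX, hesc, rfl⟩
    refine ⟨X, hX, fun I hI => ?_, rfl⟩
    obtain ⟨I', hI', hII'⟩ := hJ I hI
    exact escFeas_of_subset hII' (hesc I' hI')

lemma zC_eq_of_univ_mem (hn : 1 ≤ n) {a : ℝ}
    (ha : IsGreatest {r | ∃ s, IsStableVec G s ∧ r = ∑ i, s i} a)
    {J : Set (Finset (Fin n))} (hJ : univ ∈ J) : zC G J = a := by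
  obtain ⟨s₁, hs₁, hsum₁⟩ := exists_isStableVec_sum_eq_one hn G
  have h1 : 1 ≤ a := hsum₁.symm.trans_le (ha.2 ⟨s₁, hs₁, rfl⟩)
  refine IsGreatest.csSup_eq ⟨?_, ?_⟩
  · obtain ⟨s, hs, rfl⟩ := ha.1
    obtain ⟨X, hX, hesc, hsum⟩ := exists_feasible_of_isStableVec hs h1
    exact ⟨X, hX, fun I _ => hesc I, hsum.symm⟩
  · rintro _ ⟨X, hX, hesc, rfl⟩
    have := sum_sum_le_mul_trace_of_mem_stab2 (fun t ht => ha.2 ⟨t, ht, rfl⟩)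
      (mem_stab2_of_escFeas_univ (hesc univ hJ))
    rwa [hX.2.1, mul_one] at this

end Hierarchy

/-- properties of the compressed exact subgraph hierarchy:
`ϑ(G) = z^C_0(G) = z^C_1(G)`, the levels are monotone nonincreasing, and
`z^C_n(G) = α(G)`. -/
theorem stmt6 {n : ℕ} (hn : 1 ≤ n) (G : SimpleGraph (Fin n)) (a : ℝ)
    (ha : IsGreatest { r | ∃ s, IsStableVec G s ∧ r = ∑ i, s i } a) :
    sSup { r | ∃ X, X ∈ cth2 G ∧ r = ∑ i, ∑ j, X i j } = zC G (Jk n 0) ∧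
    zC G (Jk n 0) = zC G (Jk n 1) ∧
    (∀ k, 1 ≤ k → k ≤ n → zC G (Jk n k) ≤ zC G (Jk n (k - 1))) ∧
    zC G (Jk n n) = a := by
  have h0 : zC G (Jk n 0) = sSup { r | ∃ X, X ∈ cth2 G ∧ r = ∑ i, ∑ j, X i j } :=
    zC_eq_sSup_cth2 fun X _ I hI => by
      rw [card_eq_zero.1 hI]
      exact escFeas_empty G X
  have h1 : zC G (Jk n 1) = sSup { r | ∃ X, X ∈ cth2 G ∧ r = ∑ i, ∑ j, X i j } :=
    zC_eq_sSup_cth2 fun X hX I hI => by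
      obtain ⟨i, rfl⟩ := card_eq_one.1 hI
      exact escFeas_singleton hX i
  refine ⟨h0.symm, h0.trans h1.symm, fun k _ hkn => zC_le_of_forall_subset hn fun I hI => ?_,
    zC_eq_of_univ_mem hn ha (card_fin n)⟩
  obtain ⟨I', hII', hI'⟩ :=
    exists_superset_card_eq ((show #I = k - 1 from hI).trans_le (k.sub_le 1)) (by simpa using hkn)
  exact ⟨I', hI', hII'⟩
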